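/- The quantum indel distance d(ρ₁, ρ₂) := min{ s + t : D^s(ρ₁) ∩ D^t(ρ₂) ≠ ∅ } is a metric on the set of all finite-qudit density matrices: it is nonnegative, zero iff ρ₁ = ρ₂, symmetric, and satisfies the triangle inequality d(ρ₁, ρ₃) ≤ d(ρ₁, ρ₂) + d(ρ₂, ρ₃). -/

import Mathlib

open Matrix
open scoped ComplexOrder

/-- Matrices on `n` qudits of level `l`. -/
abbrev QMat (l n : ℕ) := Matrix (Fin n → Fin l) (Fin n → Fin l) ℂ

/-- A quantum state on some finite number of qudits. -/
def QState (l : ℕ) := Σ n : ℕ, QMat l n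

/-- Density matrix: positive semidefinite with trace 1. -/
def IsDensity {l n : ℕ} (ρ : QMat l n) : Prop := ρ.PosSemidef ∧ ρ.trace = 1

def IsDensityS {l : ℕ} (ρ : QState l) : Prop := ρ.2.PosSemidef ∧ ρ.2.trace = 1

/-- Partial trace over the qudit at position `p`. -/
noncomputable def traceOut {l n : ℕ} (p : Fin (n + 1)) (ρ : QMat l (n + 1)) : QMat l n :=
  fun x y => ∑ z : Fin l, ρ (p.insertNth z x) (p.insertNth z y)

/-- Single deletion: all states obtained by tracing out one qudit. -/
def del1 {l : ℕ} : QState l → Set (QState l)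
  | ⟨0, _⟩ => ∅
  | ⟨n + 1, ρ⟩ => { σ | ∃ p : Fin (n + 1), σ = ⟨n, traceOut p ρ⟩ }

/-- Single insertion sphere: density matrices having `ρ` among their single deletions. -/
def ins1 {l : ℕ} (ρ : QState l) : Set (QState l) :=
  { σ | IsDensityS σ ∧ ρ ∈ del1 σ }

def delSet {l : ℕ} (X : Set (QState l)) : Set (QState l) := ⋃ ρ ∈ X, del1 ρ
def insSet {l : ℕ} (X : Set (QState l)) : Set (QState l) := ⋃ ρ ∈ X, ins1 ρ

/-- `s`-deletion errors. -/
def Dq {l : ℕ} : ℕ → Set (QState l) → Set (QState l)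
  | 0, X => X
  | s + 1, X => delSet (Dq s X)

/-- `t`-insertion errors. -/
def Iq {l : ℕ} : ℕ → Set (QState l) → Set (QState l)
  | 0, X => X
  | t + 1, X => insSet (Iq t X)

/-- Quantum indel distance. -/
noncomputable def qdist {l : ℕ} (ρ₁ ρ₂ : QState l) : ℕ :=
  sInf { k | ∃ s t : ℕ, s + t = k ∧ (Dq s {ρ₁} ∩ Dq t {ρ₂}).Nonempty }

/-!
Tracing out two different qudits, in either order, leads to the same state, so single deletions
form a rewriting system whose local peaks close in one step on each side. The strip lemma then
lets any two deletion sequences from a common state rejoin, each being extended by at most the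
length of the other, which turns a pair of optimal witnesses for `d(ρ₁, ρ₂)` and `d(ρ₂, ρ₃)`
into a witness for `d(ρ₁, ρ₃)`. All other axioms are immediate, once one notes that tracing out
every qudit of a density matrix leaves the scalar `1`, so the infimum defining `qdist` is over a
nonempty set.
-/

def reachIn {α : Type*} (f : α → Set α) : ℕ → α → Set α
  | 0, a => {a}
  | n + 1, a => ⋃ b ∈ reachIn f n a, f b

section Rewriting

variable {α : Type*} {f : α → Set α}

@[simp]
lemma mem_reachIn_zero {a b : α} : b ∈ reachIn f 0 a ↔ b = a := Iff.rfl

lemma mem_reachIn_succ {n : ℕ} {a c : α} :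
    c ∈ reachIn f (n + 1) a ↔ ∃ b ∈ reachIn f n a, c ∈ f b := by
  simp [reachIn]

@[simp]
lemma mem_reachIn_one {a b : α} : b ∈ reachIn f 1 a ↔ b ∈ f a := by
  simp [mem_reachIn_succ]

lemma mem_reachIn_add {m n : ℕ} {a b c : α} (hb : b ∈ reachIn f m a) (hc : c ∈ reachIn f n b) :
    c ∈ reachIn f (n + m) a := by
  induction n generalizing c with
  | zero => rwa [mem_reachIn_zero.mp hc, zero_add]
  | succ n ih =>
    obtain ⟨c', hc', hcc'⟩ := mem_reachIn_succ.mp hc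
    rw [Nat.add_right_comm]
    exact mem_reachIn_succ.mpr ⟨c', ih hc', hcc'⟩

variable (hf : ∀ a b c, b ∈ f a → c ∈ f a → b = c ∨ (f b ∩ f c).Nonempty)
include hf

lemma reachIn_strip {t : ℕ} {a b c : α} (hb : b ∈ f a) (hc : c ∈ reachIn f t a) :
    ∃ d t' s', t' ≤ t ∧ s' ≤ 1 ∧ d ∈ reachIn f t' b ∧ d ∈ reachIn f s' c := by
  induction t generalizing c with
  | zero =>
    rw [mem_reachIn_zero.mp hc]
    exact ⟨b, 0, 1, le_rfl, le_rfl, rfl, by simpa⟩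
  | succ t ih =>
    obtain ⟨c₁, hc₁, hcc₁⟩ := mem_reachIn_succ.mp hc
    obtain ⟨d₁, t', s', ht', hs', hd₁b, hd₁c₁⟩ := ih hc₁
    interval_cases s'
    · rw [mem_reachIn_zero] at hd₁c₁
      subst hd₁c₁
      exact ⟨c, t' + 1, 0, by omega, zero_le_one, mem_reachIn_succ.mpr ⟨d₁, hd₁b, hcc₁⟩, rfl⟩
    · rw [mem_reachIn_one] at hd₁c₁
      obtain rfl | ⟨d, hdd₁, hdc⟩ := hf c₁ d₁ c hd₁c₁ hcc₁
      · exact ⟨d₁, t', 0, by omega, zero_le_one, hd₁b, rfl⟩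
      · exact ⟨d, t' + 1, 1, by omega, le_rfl, mem_reachIn_succ.mpr ⟨d₁, hd₁b, hdd₁⟩,
          by simpa⟩

lemma reachIn_church_rosser {s t : ℕ} {a b c : α} (hb : b ∈ reachIn f s a)
    (hc : c ∈ reachIn f t a) :
    ∃ d t' s', t' ≤ t ∧ s' ≤ s ∧ d ∈ reachIn f t' b ∧ d ∈ reachIn f s' c := by
  induction s generalizing b with
  | zero =>
    rw [mem_reachIn_zero.mp hb]
    exact ⟨c, t, 0, le_rfl, le_rfl, hc, rfl⟩
  | succ s ih =>
    obtain ⟨b₁, hb₁, hbb₁⟩ := mem_reachIn_succ.mp hb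
    obtain ⟨d₁, t₁, s₁, ht₁, hs₁, hd₁b₁, hd₁c⟩ := ih hb₁
    obtain ⟨d, t', e, ht', he, hdb, hdd₁⟩ := reachIn_strip hf hbb₁ hd₁b₁
    exact ⟨d, t', e + s₁, by omega, by omega, hdb, mem_reachIn_add hd₁c hdd₁⟩

end Rewriting

namespace Fin

theorem insertNth_insertNth_swap {α : Type*} {n : ℕ} (i : Fin (n + 2)) (j : Fin (n + 1))
    (a b : α) (x : Fin n → α) :
    (i.insertNth a (j.insertNth b x : Fin (n + 1) → α) : Fin (n + 2) → α) =
      (i.succAbove j).insertNth b ((j.predAbove i).insertNth a x : Fin (n + 1) → α) := by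
  refine (insertNth_eq_iff.mpr ⟨by simp, insertNth_eq_iff.mpr ⟨?_, ?_⟩⟩).symm
  · simp [removeNth_apply, succAbove_succAbove_predAbove]
  · ext k
    simp [removeNth_apply, succAbove_succAbove_succAbove_predAbove]

end Fin

section PartialTrace

variable {l n : ℕ}

lemma traceOut_traceOut_swap (i : Fin (n + 2)) (j : Fin (n + 1)) (ρ : QMat l (n + 2)) :
    traceOut j (traceOut i ρ) = traceOut (j.predAbove i) (traceOut (i.succAbove j) ρ) := by
  ext x y
  simp only [traceOut, Fin.insertNth_insertNth_swap i j]
  exact Finset.sum_comm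

lemma trace_traceOut (p : Fin (n + 1)) (ρ : QMat l (n + 1)) :
    (traceOut p ρ).trace = ρ.trace := by
  rw [Matrix.trace, Matrix.trace, ← (Fin.insertNthEquiv (fun _ => Fin l) p).sum_comp,
    Fintype.sum_prod_type, Finset.sum_comm]
  rfl

end PartialTrace

section Deletion

variable {l : ℕ}

def scalarState (c : ℂ) : QState l := ⟨0, fun _ _ => c⟩

lemma Dq_singleton (s : ℕ) (ρ : QState l) : Dq s {ρ} = reachIn del1 s ρ := by
  induction s with
  | zero => rfl
  | succ s ih => simp only [Dq, delSet, ih, reachIn]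

lemma del1_diamond (ρ σ τ : QState l) (hσ : σ ∈ del1 ρ) (hτ : τ ∈ del1 ρ) :
    σ = τ ∨ (del1 σ ∩ del1 τ).Nonempty := by
  obtain ⟨_ | _ | m, M⟩ := ρ
  · simp [del1] at hσ
  · obtain ⟨p, rfl⟩ := hσ
    obtain ⟨q, rfl⟩ := hτ
    exact .inl (by rw [Subsingleton.elim (α := Fin 1) p q])
  · obtain ⟨p, rfl⟩ := hσ
    obtain ⟨q, rfl⟩ := hτ
    obtain rfl | hpq := eq_or_ne q p
    · exact .inl rfl
    obtain ⟨j, rfl⟩ := Fin.exists_succAbove_eq hpq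
    exact .inr ⟨_, ⟨j, rfl⟩, ⟨j.predAbove p, by rw [traceOut_traceOut_swap]⟩⟩

lemma scalarState_trace_mem_reachIn_del1 {n : ℕ} (ρ : QMat l n) :
    scalarState ρ.trace ∈ reachIn del1 n ⟨n, ρ⟩ := by
  induction n with
  | zero =>
    refine mem_reachIn_zero.mpr (congrArg (Sigma.mk 0) ?_)
    ext x y
    rw [Matrix.trace, Fintype.sum_unique, Subsingleton.elim x default,
      Subsingleton.elim y default]
    rfl
  | succ n ih =>
    rw [← trace_traceOut 0 ρ]
    exact mem_reachIn_add (b := ⟨n, traceOut 0 ρ⟩) (mem_reachIn_one.mpr ⟨0, rfl⟩) (ih _)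

end Deletion

section Distance

variable {l : ℕ} {ρ₁ ρ₂ ρ₃ : QState l}

lemma qdist_eq_sInf (ρ₁ ρ₂ : QState l) : qdist ρ₁ ρ₂ =
    sInf {k | ∃ s t : ℕ, s + t = k ∧ (reachIn del1 s ρ₁ ∩ reachIn del1 t ρ₂).Nonempty} := by
  simp only [qdist, Dq_singleton]

lemma qdist_le {s t : ℕ} {μ : QState l} (h₁ : μ ∈ reachIn del1 s ρ₁)
    (h₂ : μ ∈ reachIn del1 t ρ₂) : qdist ρ₁ ρ₂ ≤ s + t := by
  rw [qdist_eq_sInf]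
  exact Nat.sInf_le ⟨s, t, rfl, μ, h₁, h₂⟩

lemma exists_qdist_eq (h : ρ₁.2.trace = ρ₂.2.trace) :
    ∃ s t μ, μ ∈ reachIn del1 s ρ₁ ∧ μ ∈ reachIn del1 t ρ₂ ∧ qdist ρ₁ ρ₂ = s + t := by
  have hne : {k | ∃ s t : ℕ, s + t = k ∧
      (reachIn del1 s ρ₁ ∩ reachIn del1 t ρ₂).Nonempty}.Nonempty :=
    ⟨_, ρ₁.1, ρ₂.1, rfl, _, scalarState_trace_mem_reachIn_del1 ρ₁.2,
      h ▸ scalarState_trace_mem_reachIn_del1 ρ₂.2⟩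
  obtain ⟨s, t, hst, μ, h₁, h₂⟩ := Nat.sInf_mem hne
  exact ⟨s, t, μ, h₁, h₂, by rw [qdist_eq_sInf, hst]⟩

lemma qdist_comm (ρ₁ ρ₂ : QState l) : qdist ρ₁ ρ₂ = qdist ρ₂ ρ₁ := by
  unfold qdist
  congr 1
  ext k
  constructor <;> rintro ⟨s, t, rfl, hst⟩ <;> exact ⟨t, s, add_comm t s, Set.inter_comm .. ▸ hst⟩

lemma qdist_self (ρ : QState l) : qdist ρ ρ = 0 :=
  Nat.le_zero.mp (qdist_le (s := 0) (t := 0) rfl rfl)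

lemma eq_of_qdist_eq_zero (h : ρ₁.2.trace = ρ₂.2.trace) (h₀ : qdist ρ₁ ρ₂ = 0) : ρ₁ = ρ₂ := by
  obtain ⟨s, t, μ, h₁, h₂, hst⟩ := exists_qdist_eq h
  obtain ⟨rfl, rfl⟩ : s = 0 ∧ t = 0 := by omega
  exact (mem_reachIn_zero.mp h₁).symm.trans (mem_reachIn_zero.mp h₂)

lemma qdist_triangle (h₁₂ : ρ₁.2.trace = ρ₂.2.trace) (h₂₃ : ρ₂.2.trace = ρ₃.2.trace) :
    qdist ρ₁ ρ₃ ≤ qdist ρ₁ ρ₂ + qdist ρ₂ ρ₃ := by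
  obtain ⟨s₁, t₁, σ, hσ₁, hσ₂, e₁₂⟩ := exists_qdist_eq h₁₂
  obtain ⟨s₂, t₂, τ, hτ₂, hτ₃, e₂₃⟩ := exists_qdist_eq h₂₃
  obtain ⟨μ, t', s', ht', hs', hμσ, hμτ⟩ := reachIn_church_rosser del1_diamond hσ₂ hτ₂
  have := qdist_le (mem_reachIn_add hσ₁ hμσ) (mem_reachIn_add hτ₃ hμτ)
  omega

end Distance

/-- The quantum indel distance is a metric on finite-qudit density matrices:
nonnegative, zero iff equal, symmetric, and satisfying the triangle inequality. -/
theorem qdist_is_metric {l : ℕ} :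
    (∀ ρ₁ ρ₂ : QState l, IsDensityS ρ₁ → IsDensityS ρ₂ → 0 ≤ qdist ρ₁ ρ₂) ∧
    (∀ ρ₁ ρ₂ : QState l, IsDensityS ρ₁ → IsDensityS ρ₂ →
      (qdist ρ₁ ρ₂ = 0 ↔ ρ₁ = ρ₂)) ∧
    (∀ ρ₁ ρ₂ : QState l, IsDensityS ρ₁ → IsDensityS ρ₂ →
      qdist ρ₁ ρ₂ = qdist ρ₂ ρ₁) ∧
    (∀ ρ₁ ρ₂ ρ₃ : QState l, IsDensityS ρ₁ → IsDensityS ρ₂ → IsDensityS ρ₃ →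
      qdist ρ₁ ρ₃ ≤ qdist ρ₁ ρ₂ + qdist ρ₂ ρ₃) := by
  have htr {ρ σ : QState l} (hρ : IsDensityS ρ) (hσ : IsDensityS σ) : ρ.2.trace = σ.2.trace :=
    hρ.2.trans hσ.2.symm
  refine ⟨fun _ _ _ _ => Nat.zero_le _, fun ρ₁ ρ₂ h₁ h₂ => ?_, fun ρ₁ ρ₂ _ _ => qdist_comm ρ₁ ρ₂,
    fun _ _ _ h₁ h₂ h₃ => qdist_triangle (htr h₁ h₂) (htr h₂ h₃)⟩
  exact ⟨eq_of_qdist_eq_zero (htr h₁ h₂), fun h => h ▸ qdist_self ρ₁⟩
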